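/- Suppose Σ_{n=1}^{∞} |1 − l_n/r_n| < ∞. Then for any non-decreasing sequence of stopping times (T_m)_{m≥1} with E[T_m] < ∞ for every m and T_m → T_∂ almost surely, the limit lim_{m→∞} E[X_{T_m}] exists and lies in (0, ∞). -/

import Mathlib

open MeasureTheory Filter Topology Finset
open scoped ENNReal NNReal Classical

/-- Partial products `t_n = (l_1 ⋯ l_n)/(r_1 ⋯ r_n)`, with `t_0 = 1`. -/
noncomputable def tp (l r : ℕ → ℝ) (n : ℕ) : ℝ :=
  (∏ i ∈ Finset.Icc 1 n, l i) / (∏ i ∈ Finset.Icc 1 n, r i)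

/-- `x_n = Σ_{i=0}^{n-1} t_i`. -/
noncomputable def xp (l r : ℕ → ℝ) (n : ℕ) : ℝ :=
  ∑ i ∈ Finset.range n, tp l r i

/-- The natural filtration of the process `X` (σ-algebra generated by `X_0, …, X_m`). -/
def natFilt {Ω : Type*} (X : ℕ → Ω → ℕ) (m : ℕ) : MeasurableSpace Ω :=
  ⨆ i ∈ Finset.range (m + 1), MeasurableSpace.comap (X i) ⊤

/-- A birth–death chain on ℕ started at `k`, with up–probabilities `r n` and
down–probabilities `l n` for states `n ≥ 1`, and `0` absorbing.  The Markov
property is encoded by conditioning on arbitrary events of the natural filtration. -/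
structure IsBDChain {Ω : Type*} [MeasurableSpace Ω] (P : Measure Ω)
    (X : ℕ → Ω → ℕ) (k : ℕ) (l r : ℕ → ℝ) : Prop where
  isProb : IsProbabilityMeasure P
  one_le_k : 1 ≤ k
  l_pos : ∀ n, 1 ≤ n → 0 < l n
  r_pos : ∀ n, 1 ≤ n → 0 < r n
  lr_one : ∀ n, 1 ≤ n → l n + r n = 1
  meas : ∀ m, Measurable (X m)
  init : ∀ᵐ ω ∂P, X 0 ω = k
  absorb : ∀ᵐ ω ∂P, ∀ m, X m ω = 0 → X (m + 1) ω = 0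
  step_up : ∀ m n, 1 ≤ n → ∀ A : Set Ω, MeasurableSet[natFilt X m] A →
    P (A ∩ {ω | X m ω = n ∧ X (m + 1) ω = n + 1}) =
      ENNReal.ofReal (r n) * P (A ∩ {ω | X m ω = n})
  step_down : ∀ m n, 1 ≤ n → ∀ A : Set Ω, MeasurableSet[natFilt X m] A →
    P (A ∩ {ω | X m ω = n ∧ X (m + 1) ω = n - 1}) =
      ENNReal.ofReal (l n) * P (A ∩ {ω | X m ω = n})

/-- A (finite-valued) stopping time for the natural filtration of `X`. -/
def IsBDStop {Ω : Type*} (X : ℕ → Ω → ℕ) (T : Ω → ℕ) : Prop :=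
  ∀ m, MeasurableSet[natFilt X m] {ω | T ω = m}

/-- An extended-ℕ-valued stopping time for the natural filtration of `X`. -/
def IsBDStopE {Ω : Type*} (X : ℕ → Ω → ℕ) (T : Ω → ℕ∞) : Prop :=
  ∀ m : ℕ, MeasurableSet[natFilt X m] {ω | T ω = (m : ℕ∞)}

/-- First hitting time of the set `S ⊆ ℕ` by the path `m ↦ X m ω`, valued in `ℕ∞`. -/
noncomputable def hitTime {Ω : Type*} (X : ℕ → Ω → ℕ) (S : Set ℕ) (ω : Ω) : ℕ∞ :=
  sInf ((fun m : ℕ => (m : ℕ∞)) '' {m | X m ω ∈ S})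

/-- `T_∂`: the first hitting time of `0`, with value `∞` if `0` is never hit. -/
noncomputable def hit0 {Ω : Type*} (X : ℕ → Ω → ℕ) (ω : Ω) : ℕ∞ :=
  hitTime X {0} ω

/-- `G_T^n`: the number of times `m` with `0 ≤ m ≤ T-1` and `X_m = n` (finite `T`). -/
def count {Ω : Type*} (X : ℕ → Ω → ℕ) (n : ℕ) (T : Ω → ℕ) (ω : Ω) : ℕ :=
  ((Finset.range (T ω)).filter fun m => X m ω = n).card

/-- `G_τ^n` for an `ℕ∞`-valued time `τ`, valued in `ℝ≥0∞`. -/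
noncomputable def countE {Ω : Type*} (X : ℕ → Ω → ℕ) (n : ℕ) (τ : Ω → ℕ∞) (ω : Ω) : ℝ≥0∞ :=
  ∑' m : ℕ, if (m : ℕ∞) < τ ω ∧ X m ω = n then 1 else 0

/-!
The summability hypothesis makes `t_n` converge to some `c > 0` (compare `log t_n` with
`Σ |1 - l_i / r_i|`), so by Cesàro the scale function satisfies `x_n ~ c n`. The scale function
is harmonic for the chain, hence optional stopping, dominated by `x_n ≤ b n` and `X_m ≤ k + m`,
gives `E[x(X_{T_j})] = x(k)` for every integrable stopping time. Every state `n ≥ 1` is visited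
only finitely often (from `n` the chain walks straight down to the absorbing state `0` with
positive probability, which bounds the expected number of visits), so `P(X_{T_j} = n) → 0` as
`T_j → T_∂`. The law of `X_{T_j}` thus escapes to `0` and to infinity, where `x_n ≈ c n`, and
`E[X_{T_j}] → x(k) / c ∈ (0, ∞)`.
-/

open Asymptotics

section ScaleFunction

variable {l r : ℕ → ℝ}

lemma tp_succ (n : ℕ) : tp l r (n + 1) = tp l r n * (l (n + 1) / r (n + 1)) := by
  rw [tp, tp, prod_Icc_succ_top (by omega), prod_Icc_succ_top (by omega), mul_div_mul_comm]

lemma tp_eq_prod_range (n : ℕ) : tp l r n = ∏ i ∈ range n, l (i + 1) / r (i + 1) := by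
  induction n with
  | zero => simp [tp]
  | succ n ih => rw [tp_succ, prod_range_succ, ih]

lemma tp_pos (hl : ∀ n, 1 ≤ n → 0 < l n) (hr : ∀ n, 1 ≤ n → 0 < r n) (n : ℕ) :
    0 < tp l r n := by
  rw [tp_eq_prod_range]
  exact prod_pos fun i _ => div_pos (hl _ (by omega)) (hr _ (by omega))

lemma xp_succ (n : ℕ) : xp l r (n + 1) = xp l r n + tp l r n :=
  sum_range_succ _ _

lemma xp_nonneg (hl : ∀ n, 1 ≤ n → 0 < l n) (hr : ∀ n, 1 ≤ n → 0 < r n) (n : ℕ) :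
    0 ≤ xp l r n :=
  sum_nonneg fun i _ => (tp_pos hl hr i).le

lemma xp_pos (hl : ∀ n, 1 ≤ n → 0 < l n) (hr : ∀ n, 1 ≤ n → 0 < r n) {n : ℕ} (hn : n ≠ 0) :
    0 < xp l r n :=
  sum_pos (fun i _ => tp_pos hl hr i) (nonempty_range_iff.2 hn)

lemma r_mul_xp_add_l_mul_xp {n : ℕ} (hr : r (n + 1) ≠ 0) (hlr : l (n + 1) + r (n + 1) = 1) :
    r (n + 1) * xp l r (n + 2) + l (n + 1) * xp l r n = xp l r (n + 1) := by
  have hstep : r (n + 1) * tp l r (n + 1) = l (n + 1) * tp l r n := by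
    rw [tp_succ]; field_simp
  rw [xp_succ (n + 1), xp_succ n]
  linear_combination hstep + (xp l r n + tp l r n) * hlr

lemma exists_tendsto_tp (hl : ∀ n, 1 ≤ n → 0 < l n) (hr : ∀ n, 1 ≤ n → 0 < r n)
    (hsum : Summable fun n : ℕ => |1 - l (n + 1) / r (n + 1)|) :
    ∃ c : ℝ, 0 < c ∧ Tendsto (tp l r) atTop (𝓝 c) := by
  set u : ℕ → ℝ := fun i => l (i + 1) / r (i + 1)
  have hlog : Summable fun i => Real.log (u i) := by
    have hu : Summable fun i => u i - 1 :=
      summable_abs_iff.1 (by simpa only [abs_sub_comm] using hsum)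
    simpa using Real.summable_log_one_add_of_summable hu
  obtain ⟨S, hS⟩ := hlog
  refine ⟨Real.exp S, Real.exp_pos S, ?_⟩
  have htp : tp l r = fun n => Real.exp (∑ i ∈ range n, Real.log (u i)) := by
    ext n
    rw [tp_eq_prod_range, Real.exp_sum]
    exact prod_congr rfl fun i _ =>
      (Real.exp_log (div_pos (hl _ (by omega)) (hr _ (by omega)))).symm
  rw [htp]
  exact (Real.continuous_exp.tendsto S).comp hS.tendsto_sum_nat

lemma const_mul_isEquivalent_xp {c : ℝ} (hc : 0 < c) (htc : Tendsto (tp l r) atTop (𝓝 c)) :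
    (fun n : ℕ => c * n) ~[atTop] xp l r := by
  refine (Asymptotics.isEquivalent_of_tendsto_one ?_).symm
  have := (htc.cesaro).div_const c
  rw [div_self hc.ne'] at this
  refine this.congr' ?_
  filter_upwards [eventually_ne_atTop 0] with n hn
  simp only [Pi.div_apply, xp]
  field_simp

lemma xp_le_mul {b : ℝ} (hb : ∀ n, tp l r n ≤ b) (n : ℕ) : xp l r n ≤ n * b := by
  unfold xp
  simpa using sum_le_card_nsmul (range n) (tp l r) b fun i _ => hb i

end ScaleFunction

section Fibers

variable {Ω α : Type*} [MeasurableSpace Ω] {μ : Measure Ω}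
  [MeasurableSpace α] [Countable α] [MeasurableSingletonClass α] {Z : Ω → α}

lemma setLIntegral_comp_eq_tsum (hZ : Measurable Z) (g : α → ℝ≥0∞) (B : Set Ω) :
    ∫⁻ ω in B, g (Z ω) ∂μ = ∑' a, g a * μ (B ∩ {ω | Z ω = a}) := by
  rw [← lintegral_map (measurable_of_countable g) hZ, lintegral_countable']
  refine tsum_congr fun a => ?_
  rw [Measure.map_apply hZ (measurableSet_singleton a),
    Measure.restrict_apply (hZ (measurableSet_singleton a)), Set.inter_comm]
  rfl

lemma setLIntegral_eq_tsum_fiber (hZ : Measurable Z) (f : Ω → ℝ≥0∞) {B : Set Ω}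
    (hB : MeasurableSet B) :
    ∫⁻ ω in B, f ω ∂μ = ∑' a, ∫⁻ ω in B ∩ {ω | Z ω = a}, f ω ∂μ := by
  have hB_eq : ⋃ a, B ∩ {ω | Z ω = a} = B := by
    rw [← Set.inter_iUnion]
    exact Set.inter_eq_left.2 fun ω _ => Set.mem_iUnion.2 ⟨Z ω, rfl⟩
  conv_lhs => rw [← hB_eq]
  exact lintegral_iUnion (fun a => hB.inter (hZ (measurableSet_singleton a)))
    (fun a b hab => (pairwise_disjoint_fiber Z hab).mono Set.inter_subset_right
      Set.inter_subset_right) f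

end Fibers

lemma measurable_stopped {Ω : Type*} [MeasurableSpace Ω] {X : ℕ → Ω → ℕ}
    (hX : ∀ m, Measurable (X m)) {f : Ω → ℕ} (hf : Measurable f) :
    Measurable fun ω => X (f ω) ω :=
  (measurable_from_prod_countable_right (f := fun p : ℕ × Ω => X p.1 p.2) hX).comp
    (hf.prodMk measurable_id)

lemma tsum_measure_le_of_aedisjoint_of_add_le {Ω : Type*} [MeasurableSpace Ω] {μ : Measure Ω}
    {s : ℕ → Set Ω} (hs : ∀ m, NullMeasurableSet (s m) μ) {n : ℕ} [NeZero n]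
    (hdisj : ∀ m m', m + n ≤ m' → AEDisjoint μ (s m) (s m')) :
    ∑' m, μ (s m) ≤ n * μ Set.univ := by
  have hclass : ∀ j : Fin n, ∑' q, μ (s (q * n + j)) ≤ μ Set.univ := by
    intro j
    rw [← measure_iUnion₀ _ fun q => hs _]
    · exact measure_mono (Set.subset_univ _)
    intro q q' hqq'
    rcases lt_or_gt_of_ne hqq' with h | h
    · exact hdisj _ _ (by nlinarith [j.isLt])
    · exact (hdisj _ _ (by nlinarith [j.isLt])).symm
  calc ∑' m, μ (s m) = ∑' (q : ℕ) (j : Fin n), μ (s (q * n + j)) := by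
        rw [← ENNReal.tsum_prod, ← (Nat.divModEquiv n).symm.tsum_eq]
        rfl
    _ = ∑' (j : Fin n) (q : ℕ), μ (s (q * n + j)) := ENNReal.tsum_comm
    _ ≤ ∑' _ : Fin n, μ Set.univ := ENNReal.tsum_le_tsum hclass
    _ = n * μ Set.univ := by simp [tsum_fintype]

lemma tendsto_lintegral_enorm_comp_of_isLittleO {Ω ι E F : Type*} [MeasurableSpace Ω]
    {μ : Measure Ω} {L : Filter ι} [NormedAddCommGroup E] [NormedAddCommGroup F]
    {Y : ι → Ω → ℕ} (hY : ∀ j, Measurable (Y j)) {e : ℕ → E} {f : ℕ → F}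
    (hef : e =o[atTop] f) (he0 : e 0 = 0) {K : ℝ≥0∞} (hK : K ≠ ⊤)
    (hf : ∀ j, ∫⁻ ω, ‖f (Y j ω)‖ₑ ∂μ ≤ K)
    (hvanish : ∀ n ≠ 0, Tendsto (fun j => μ {ω | Y j ω = n}) L (𝓝 0)) :
    Tendsto (fun j => ∫⁻ ω, ‖e (Y j ω)‖ₑ ∂μ) L (𝓝 0) := by
  rw [ENNReal.tendsto_nhds_zero]
  intro ε hε
  obtain ⟨δ, hδ, hδK⟩ := ENNReal.exists_nnreal_pos_mul_lt hK (ENNReal.half_pos hε.ne').ne'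
  obtain ⟨N, hN⟩ := eventually_atTop.1 (hef.def (NNReal.coe_pos.2 hδ))
  -- Small values of `Y` are handled by `hvanish`, large ones by `hef`.
  have hpt : ∀ j ω, ‖e (Y j ω)‖ₑ ≤ δ * ‖f (Y j ω)‖ₑ +
      ∑ n ∈ range N, {ω | Y j ω = n}.indicator (fun _ => ‖e n‖ₑ) ω := by
    intro j ω
    rcases lt_or_ge (Y j ω) N with h | h
    · refine le_add_left (le_of_eq ?_)
      rw [sum_eq_single_of_mem (Y j ω) (mem_range.2 h), Set.indicator_of_mem (by exact rfl)]
      exact fun n _ hn => Set.indicator_of_notMem (s := {ω | Y j ω = n}) (Ne.symm hn) _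
    · refine le_add_right ?_
      simp only [enorm_eq_nnnorm, ← ENNReal.coe_mul, ENNReal.coe_le_coe]
      exact_mod_cast hN _ h
  have hsmall : Tendsto (fun j => ∑ n ∈ range N, ‖e n‖ₑ * μ {ω | Y j ω = n}) L (𝓝 0) := by
    rw [← sum_const_zero (s := range N)]
    refine tendsto_finsetSum _ fun n _ => ?_
    rcases eq_or_ne n 0 with rfl | hn
    · simpa [he0] using tendsto_const_nhds
    · simpa using ENNReal.Tendsto.const_mul (hvanish n hn) (Or.inr enorm_ne_top)
  filter_upwards [ENNReal.tendsto_nhds_zero.1 hsmall (ε / 2) (ENNReal.half_pos hε.ne')]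
    with j hj
  have hmeas : ∀ n, MeasurableSet {ω | Y j ω = n} := fun n => hY j (measurableSet_singleton n)
  calc ∫⁻ ω, ‖e (Y j ω)‖ₑ ∂μ
      ≤ ∫⁻ ω, (δ * ‖f (Y j ω)‖ₑ +
          ∑ n ∈ range N, {ω | Y j ω = n}.indicator (fun _ => ‖e n‖ₑ) ω) ∂μ :=
        lintegral_mono (hpt j)
    _ = δ * ∫⁻ ω, ‖f (Y j ω)‖ₑ ∂μ + ∑ n ∈ range N, ‖e n‖ₑ * μ {ω | Y j ω = n} := by
        rw [lintegral_add_right _ (Finset.measurable_sum _ fun n _ =>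
            measurable_const.indicator (hmeas n)),
          lintegral_const_mul' _ _ ENNReal.coe_ne_top,
          lintegral_finsetSum _ fun n _ => measurable_const.indicator (hmeas n)]
        simp_rw [lintegral_indicator_const (hmeas _)]
    _ ≤ δ * K + ε / 2 := by gcongr; exact hf j
    _ ≤ ε / 2 + ε / 2 := by gcongr
    _ = ε := ENNReal.add_halves ε

lemma ofReal_le_ofReal_add_enorm_sub (a b : ℝ) :
    ENNReal.ofReal a ≤ ENNReal.ofReal b + ‖a - b‖ₑ := by
  rw [Real.enorm_eq_ofReal_abs]
  exact (ENNReal.ofReal_le_ofReal (by linarith [le_abs_self (a - b)])).trans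
    ENNReal.ofReal_add_le

lemma tendsto_of_le_add_of_le_add {ι : Type*} {L : Filter ι} {u e : ι → ℝ≥0∞} {a : ℝ≥0∞}
    (he : Tendsto e L (𝓝 0)) (hu : ∀ j, u j ≤ a + e j) (ha : ∀ j, a ≤ u j + e j) :
    Tendsto u L (𝓝 a) :=
  tendsto_of_tendsto_of_tendsto_of_le_of_le
    (by simpa using ENNReal.Tendsto.sub tendsto_const_nhds he (Or.inr ENNReal.zero_ne_top))
    (by simpa using tendsto_const_nhds.add he) (fun j => tsub_le_iff_right.2 (ha j)) hu

lemma tendsto_const_mul_lintegral_of_isEquivalent {Ω ι : Type*} [MeasurableSpace Ω]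
    {μ : Measure Ω} {L : Filter ι} {Y : ι → Ω → ℕ} (hY : ∀ j, Measurable (Y j)) {f : ℕ → ℝ}
    (hf : ∀ n, 0 ≤ f n) (hf₀ : f 0 = 0) {c : ℝ} (hc : 0 ≤ c)
    (hcf : (fun n : ℕ => c * n) ~[atTop] f) {A : ℝ≥0∞} (hA : A ≠ ⊤)
    (hmean : ∀ j, ∫⁻ ω, ENNReal.ofReal (f (Y j ω)) ∂μ = A)
    (hvanish : ∀ n ≠ 0, Tendsto (fun j => μ {ω | Y j ω = n}) L (𝓝 0)) :
    Tendsto (fun j => ENNReal.ofReal c * ∫⁻ ω, (Y j ω : ℝ≥0∞) ∂μ) L (𝓝 A) := by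
  have herr : Tendsto (fun j => ∫⁻ ω, ‖c * Y j ω - f (Y j ω)‖ₑ ∂μ) L (𝓝 0) :=
    tendsto_lintegral_enorm_comp_of_isLittleO hY hcf (by simp [hf₀]) hA
      (fun j => ((lintegral_congr fun ω => Real.enorm_eq_ofReal (hf _)).trans (hmean j)).le)
      hvanish
  have hmul : ∀ j, ENNReal.ofReal c * ∫⁻ ω, (Y j ω : ℝ≥0∞) ∂μ =
      ∫⁻ ω, ENNReal.ofReal (c * Y j ω) ∂μ := fun j => by
    simp_rw [ENNReal.ofReal_mul hc, ENNReal.ofReal_natCast]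
    exact (lintegral_const_mul' _ _ ENNReal.ofReal_ne_top).symm
  have hmeas : ∀ j, Measurable fun ω => ‖c * Y j ω - f (Y j ω)‖ₑ :=
    fun j => (measurable_of_countable (fun n : ℕ => ‖c * n - f n‖ₑ)).comp (hY j)
  simp_rw [hmul]
  refine tendsto_of_le_add_of_le_add herr (fun j => ?_) (fun j => ?_) <;>
    rw [← hmean j, ← lintegral_add_right _ (hmeas j)] <;>
    refine lintegral_mono fun ω => ?_
  · exact ofReal_le_ofReal_add_enorm_sub _ _
  · rw [enorm_sub_rev]
    exact ofReal_le_ofReal_add_enorm_sub _ _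

structure IsBDPath (x : ℕ → ℕ) (k : ℕ) : Prop where
  start : x 0 = k
  absorb : ∀ m, x m = 0 → x (m + 1) = 0
  step : ∀ m, x m ≠ 0 → x (m + 1) = x m + 1 ∨ x (m + 1) = x m - 1

namespace IsBDPath

variable {x : ℕ → ℕ} {k : ℕ}

lemma le_add (hx : IsBDPath x k) (m : ℕ) : x m ≤ k + m := by
  induction m with
  | zero => exact hx.start.le
  | succ m ih =>
    by_cases h : x m = 0
    · rw [hx.absorb m h]; omega
    · rcases hx.step m h with h' | h' <;> omega

lemma eq_zero_of_le (hx : IsBDPath x k) {i m : ℕ} (him : i ≤ m) (hi : x i = 0) : x m = 0 := by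
  induction m, him using Nat.le_induction with
  | base => exact hi
  | succ m _ ih => exact hx.absorb m ih

end IsBDPath

section Filtration

variable {Ω : Type*} {X : ℕ → Ω → ℕ}

lemma natFilt_mono {m m' : ℕ} (h : m ≤ m') : natFilt X m ≤ natFilt X m' :=
  biSup_mono fun i hi => mem_range.2 ((mem_range.1 hi).trans_le (by omega))

lemma natFilt_le [MeasurableSpace Ω] (hX : ∀ m, Measurable (X m)) (m : ℕ) :
    natFilt X m ≤ ‹MeasurableSpace Ω› :=
  iSup₂_le fun i _ => (hX i).comap_le

lemma measurableSet_natFilt {i m : ℕ} (h : i ≤ m) (n : ℕ) :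
    MeasurableSet[natFilt X m] {ω | X i ω = n} :=
  le_biSup (fun j => MeasurableSpace.comap (X j) ⊤) (mem_range.2 (by omega)) _
    ⟨{n}, trivial, rfl⟩

lemma IsBDStop.measurableSet_lt {T : Ω → ℕ} (hT : IsBDStop X T) (m : ℕ) :
    MeasurableSet[natFilt X m] {ω | m < T ω} := by
  have : {ω | m < T ω} = (⋃ i ∈ Finset.range (m + 1), {ω | T ω = i})ᶜ := by
    ext ω
    simp only [Set.mem_ofPred_eq, Set.mem_compl_iff, Set.mem_iUnion, mem_range, Nat.lt_succ_iff,
      exists_prop, not_exists, not_and]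
    exact ⟨fun h i hi hTi => by omega, fun h => not_le.1 fun hT => h _ hT rfl⟩
  rw [this]
  exact (Finset.measurableSet_biUnion _ fun i hi =>
    natFilt_mono (Nat.lt_succ_iff.1 (mem_range.1 hi)) _ (hT i)).compl

lemma IsBDStop.measurable [MeasurableSpace Ω] (hX : ∀ m, Measurable (X m)) {T : Ω → ℕ}
    (hT : IsBDStop X T) : Measurable T :=
  measurable_to_countable' fun m => natFilt_le hX m _ (hT m)

end Filtration

lemma hit0_eq_natCast {Ω : Type*} {X : ℕ → Ω → ℕ} {ω : Ω} {M : ℕ} (hM : hit0 X ω = M) :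
    X M ω = 0 := by
  have hne : ((fun m : ℕ => (m : ℕ∞)) '' {m | X m ω ∈ ({0} : Set ℕ)}).Nonempty := by
    by_contra h
    rw [Set.not_nonempty_iff_eq_empty] at h
    simp only [hit0, hitTime, h, sInf_empty] at hM
    exact ENat.top_ne_natCast M hM
  have hmem : hit0 X ω ∈ _ := csInf_mem hne
  obtain ⟨i, hi, hiM⟩ := hM ▸ hmem
  rw [← Nat.cast_inj.1 hiM]
  exact hi

lemma eventually_ne_of_tendsto_hit0 {Ω : Type*} {X : ℕ → Ω → ℕ} {ω : Ω} {n : ℕ} (hn : n ≠ 0)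
    (hvis : ∀ᶠ m in atTop, X m ω ≠ n) {τ : ℕ → ℕ}
    (hτ : Tendsto (fun j => (τ j : ℕ∞)) atTop (𝓝 (hit0 X ω))) :
    ∀ᶠ j in atTop, X (τ j) ω ≠ n := by
  by_cases htop : hit0 X ω = ⊤
  · rw [htop, ENat.tendsto_nhds_top_iff_natCast_lt] at hτ
    have hτ' : Tendsto τ atTop atTop :=
      tendsto_atTop.2 fun N => (hτ N).mono fun j hj => by exact_mod_cast hj.le
    exact hτ'.eventually hvis
  · -- finite points of `ℕ∞` are isolated, so `τ j` is eventually equal to the hitting time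
    obtain ⟨M, hM⟩ := ENat.ne_top_iff_exists.1 htop
    rw [← hM] at hτ
    filter_upwards [hτ ((ENat.mem_nhds_natCast_iff M).2 rfl)] with j hj
    rw [← Nat.cast_inj.1 hj, hit0_eq_natCast hM.symm]
    exact hn.symm

/-- The one-step transition operator: `bdMean l r g n = E[g (X (m + 1)) | X m = n]`. -/
noncomputable def bdMean (l r : ℕ → ℝ) (g : ℕ → ℝ≥0∞) : ℕ → ℝ≥0∞
  | 0 => g 0
  | n + 1 => ENNReal.ofReal (r (n + 1)) * g (n + 1 + 1) + ENNReal.ofReal (l (n + 1)) * g n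

lemma bdMean_ofReal_xp {l r : ℕ → ℝ} (hl : ∀ n, 1 ≤ n → 0 < l n) (hr : ∀ n, 1 ≤ n → 0 < r n)
    (hlr : ∀ n, 1 ≤ n → l n + r n = 1) :
    bdMean l r (fun n => ENNReal.ofReal (xp l r n)) = fun n => ENNReal.ofReal (xp l r n) := by
  ext (_ | n)
  · rfl
  · have h1 : 1 ≤ n + 1 := by omega
    rw [bdMean, ← ENNReal.ofReal_mul (hr _ h1).le, ← ENNReal.ofReal_mul (hl _ h1).le,
      ← ENNReal.ofReal_add (mul_nonneg (hr _ h1).le (xp_nonneg hl hr _))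
        (mul_nonneg (hl _ h1).le (xp_nonneg hl hr _)),
      r_mul_xp_add_l_mul_xp (hr _ h1).ne' (hlr _ h1)]

namespace IsBDChain

variable {Ω : Type*} [MeasurableSpace Ω] {P : Measure Ω} {X : ℕ → Ω → ℕ} {k : ℕ} {l r : ℕ → ℝ}

lemma ae_step (hC : IsBDChain P X k l r) (m : ℕ) {n : ℕ} (hn : 1 ≤ n) :
    ∀ᵐ ω ∂P, X m ω = n → X (m + 1) ω = n + 1 ∨ X (m + 1) ω = n - 1 := by
  have := hC.isProb
  have hmeas : ∀ i j, MeasurableSet {ω | X m ω = i ∧ X (m + 1) ω = j} := fun i j =>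
    (hC.meas m (measurableSet_singleton i)).inter (hC.meas (m + 1) (measurableSet_singleton j))
  have hup := hC.step_up m n hn Set.univ MeasurableSet.univ
  have hdown := hC.step_down m n hn Set.univ MeasurableSet.univ
  simp only [Set.univ_inter] at hup hdown
  have hsplit : P ({ω | X m ω = n ∧ X (m + 1) ω = n + 1} ∪
      {ω | X m ω = n ∧ X (m + 1) ω = n - 1}) = P {ω | X m ω = n} := by
    rw [measure_union (Set.disjoint_left.2 fun ω h h' => by have := h.2; have := h'.2; omega)
      (hmeas _ _), hup, hdown, ← add_mul, ← ENNReal.ofReal_add (hC.r_pos n hn).le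
      (hC.l_pos n hn).le, add_comm, hC.lr_one n hn, ENNReal.ofReal_one, one_mul]
  rw [ae_iff]
  calc P {ω | ¬(X m ω = n → X (m + 1) ω = n + 1 ∨ X (m + 1) ω = n - 1)}
      = P ({ω | X m ω = n} \ ({ω | X m ω = n ∧ X (m + 1) ω = n + 1} ∪
          {ω | X m ω = n ∧ X (m + 1) ω = n - 1})) := by
        congr 1; ext ω; simp only [Set.mem_ofPred_eq, Set.mem_sdiff, Set.mem_union]; tauto
    _ = 0 := by
        have hsub : {ω | X m ω = n ∧ X (m + 1) ω = n + 1} ∪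
            {ω | X m ω = n ∧ X (m + 1) ω = n - 1} ⊆ {ω | X m ω = n} :=
          Set.union_subset (fun ω h => h.1) fun ω h => h.1
        rw [measure_sdiff hsub ((hmeas _ _).union (hmeas _ _)).nullMeasurableSet
          (measure_ne_top _ _), hsplit, tsub_self]

lemma ae_isBDPath (hC : IsBDChain P X k l r) : ∀ᵐ ω ∂P, IsBDPath (X · ω) k := by
  have hstep : ∀ᵐ ω ∂P, ∀ m n, X m ω = n + 1 →
      X (m + 1) ω = n + 1 + 1 ∨ X (m + 1) ω = n + 1 - 1 :=
    ae_all_iff.2 fun m => ae_all_iff.2 fun n => hC.ae_step m (by omega)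
  filter_upwards [hC.init, hC.absorb, hstep] with ω h0 habs hst
  refine ⟨h0, habs, fun m hm => ?_⟩
  obtain ⟨n, hn⟩ := Nat.exists_eq_succ_of_ne_zero hm
  rw [hn]
  exact hst m n hn

lemma setLIntegral_fiber_succ (hC : IsBDChain P X k l r) (g : ℕ → ℝ≥0∞) {m n : ℕ}
    {B : Set Ω} (hB : MeasurableSet[natFilt X m] B) :
    ∫⁻ ω in B ∩ {ω | X m ω = n}, g (X (m + 1) ω) ∂P =
      bdMean l r g n * P (B ∩ {ω | X m ω = n}) := by
  have hS : MeasurableSet (B ∩ {ω | X m ω = n}) :=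
    (natFilt_le hC.meas m _ hB).inter (hC.meas m (measurableSet_singleton n))
  cases n with
  | zero =>
    rw [← setLIntegral_const]
    refine setLIntegral_congr_fun_ae hS (hC.ae_isBDPath.mono fun ω hω hmem => ?_)
    rw [hω.absorb m hmem.2]
    rfl
  | succ n =>
    rw [setLIntegral_comp_eq_tsum (hC.meas (m + 1)),
      tsum_eq_sum (s := {n, n + 1 + 1}) fun n' hn' => ?_, sum_pair (by omega)]
    · have hup := hC.step_up m (n + 1) (by omega) B hB
      have hdown := hC.step_down m (n + 1) (by omega) B hB
      rw [Nat.add_sub_cancel] at hdown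
      rw [Set.inter_assoc, ← Set.ofPred_and, Set.inter_assoc, ← Set.ofPred_and, hup, hdown,
        bdMean]
      ring
    · rw [mem_insert, mem_singleton, not_or] at hn'
      refine mul_eq_zero_of_right _ (measure_eq_zero_iff_ae_notMem.2
        (hC.ae_isBDPath.mono fun ω hω hmem => ?_))
      obtain ⟨⟨-, hm : X m ω = n + 1⟩, hm' : X (m + 1) ω = n'⟩ := hmem
      rcases hω.step m (by simp only [hm]; omega) with h | h <;>
        simp only [hm, hm'] at h <;> omega

lemma setLIntegral_succ (hC : IsBDChain P X k l r) (g : ℕ → ℝ≥0∞) {m : ℕ}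
    {B : Set Ω} (hB : MeasurableSet[natFilt X m] B) :
    ∫⁻ ω in B, g (X (m + 1) ω) ∂P = ∫⁻ ω in B, bdMean l r g (X m ω) ∂P := by
  rw [setLIntegral_eq_tsum_fiber (hC.meas m) _ (natFilt_le hC.meas m _ hB),
    setLIntegral_comp_eq_tsum (hC.meas m)]
  exact tsum_congr fun n => hC.setLIntegral_fiber_succ g hB

lemma lintegral_stopped_min (hC : IsBDChain P X k l r) {g : ℕ → ℝ≥0∞} (hg : bdMean l r g = g)
    {T : Ω → ℕ} (hT : IsBDStop X T) (m : ℕ) :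
    ∫⁻ ω, g (X (min (T ω) m) ω) ∂P = g k := by
  have := hC.isProb
  induction m with
  | zero =>
    simp only [Nat.min_zero]
    rw [lintegral_congr_ae (hC.init.mono fun ω h => by rw [h]), lintegral_const, measure_univ,
      mul_one]
  | succ m ih =>
    have hB := hT.measurableSet_lt m
    have hB' := natFilt_le hC.meas m _ hB
    rw [← ih, ← lintegral_add_compl (fun ω => g (X (min (T ω) (m + 1)) ω)) hB',
      ← lintegral_add_compl (fun ω => g (X (min (T ω) m) ω)) hB']
    congr 1
    · calc ∫⁻ ω in {ω | m < T ω}, g (X (min (T ω) (m + 1)) ω) ∂P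
          = ∫⁻ ω in {ω | m < T ω}, g (X (m + 1) ω) ∂P :=
            setLIntegral_congr_fun hB' fun ω (hω : m < T ω) => by rw [min_eq_right hω]
        _ = ∫⁻ ω in {ω | m < T ω}, g (X m ω) ∂P := by rw [hC.setLIntegral_succ g hB, hg]
        _ = ∫⁻ ω in {ω | m < T ω}, g (X (min (T ω) m) ω) ∂P :=
            setLIntegral_congr_fun hB' fun ω (hω : m < T ω) => by rw [min_eq_right hω.le]
    · exact setLIntegral_congr_fun hB'.compl fun ω (hω : ¬m < T ω) => by
        rw [min_eq_left (by omega), min_eq_left (by omega)]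

lemma lintegral_stopped (hC : IsBDChain P X k l r) {g : ℕ → ℝ≥0∞} (hg : bdMean l r g = g)
    {b : ℝ≥0∞} (hb : b ≠ ⊤) (hgb : ∀ n, g n ≤ b * n) {T : Ω → ℕ} (hT : IsBDStop X T)
    (hTint : ∫⁻ ω, (T ω : ℝ≥0∞) ∂P ≠ ⊤) :
    ∫⁻ ω, g (X (T ω) ω) ∂P = g k := by
  have := hC.isProb
  have hTm := hT.measurable hC.meas
  refine tendsto_nhds_unique (tendsto_lintegral_of_dominated_convergence
    (F := fun m ω => g (X (min (T ω) m) ω)) (fun ω => b * ((k : ℝ≥0∞) + T ω))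
    (fun m => ?_) (fun m => ?_) ?_ ?_) ?_
  · exact (measurable_of_countable g).comp
      (measurable_stopped hC.meas (hTm.min measurable_const))
  · filter_upwards [hC.ae_isBDPath] with ω hω
    refine (hgb _).trans ?_
    gcongr
    exact_mod_cast (hω.le_add _).trans (by omega)
  · rw [lintegral_const_mul' _ _ hb, lintegral_add_left measurable_const, lintegral_const,
      measure_univ, mul_one]
    exact ENNReal.mul_ne_top hb (ENNReal.add_ne_top.2 ⟨ENNReal.natCast_ne_top k, hTint⟩)
  · exact ae_of_all _ fun ω =>
      tendsto_atTop_of_eventually_const (i₀ := T ω) fun m hm => by rw [min_eq_left hm]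
  · simp_rw [hC.lintegral_stopped_min hg hT]
    exact tendsto_const_nhds

lemma lintegral_ofReal_xp_stopped (hC : IsBDChain P X k l r) {b : ℝ} (hb : ∀ n, tp l r n ≤ b)
    {T : Ω → ℕ} (hT : IsBDStop X T) (hTint : ∫⁻ ω, (T ω : ℝ≥0∞) ∂P ≠ ⊤) :
    ∫⁻ ω, ENNReal.ofReal (xp l r (X (T ω) ω)) ∂P = ENNReal.ofReal (xp l r k) :=
  hC.lintegral_stopped (bdMean_ofReal_xp hC.l_pos hC.r_pos hC.lr_one) ENNReal.ofReal_ne_top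
    (fun n => by
      rw [mul_comm, ← ENNReal.ofReal_natCast, ← ENNReal.ofReal_mul (Nat.cast_nonneg n)]
      exact ENNReal.ofReal_le_ofReal (xp_le_mul hb n))
    hT hTint

lemma exists_mul_le_measure_descent (hC : IsBDChain P X k l r) (n : ℕ) :
    ∃ δ : ℝ≥0∞, δ ≠ 0 ∧ ∀ m (A : Set Ω), MeasurableSet[natFilt X m] A →
      δ * P (A ∩ {ω | X m ω = n}) ≤ P (A ∩ {ω | X m ω = n ∧ X (m + n) ω = 0}) := by
  induction n with
  | zero =>
    exact ⟨1, one_ne_zero, fun m A _ => by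
      rw [one_mul]; exact measure_mono fun ω h => ⟨h.1, h.2, h.2⟩⟩
  | succ n ih =>
    obtain ⟨δ, hδ, hdesc⟩ := ih
    refine ⟨δ * ENNReal.ofReal (l (n + 1)),
      mul_ne_zero hδ (ENNReal.ofReal_pos.2 (hC.l_pos (n + 1) (by omega))).ne', fun m A hA => ?_⟩
    have hA' : MeasurableSet[natFilt X (m + 1)] (A ∩ {ω | X m ω = n + 1}) :=
      (natFilt_mono (by omega) _ hA).inter (measurableSet_natFilt (by omega) _)
    have hdown := hC.step_down m (n + 1) (by omega) A hA
    rw [Nat.add_sub_cancel] at hdown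
    calc δ * ENNReal.ofReal (l (n + 1)) * P (A ∩ {ω | X m ω = n + 1})
        = δ * P (A ∩ {ω | X m ω = n + 1} ∩ {ω | X (m + 1) ω = n}) := by
          rw [mul_assoc, ← hdown, Set.inter_assoc, ← Set.ofPred_and]
      _ ≤ P (A ∩ {ω | X m ω = n + 1} ∩ {ω | X (m + 1) ω = n ∧ X (m + 1 + n) ω = 0}) :=
          hdesc (m + 1) _ hA'
      _ ≤ P (A ∩ {ω | X m ω = n + 1 ∧ X (m + (n + 1)) ω = 0}) :=
          measure_mono fun ω h => ⟨h.1.1, h.1.2, by convert h.2.2 using 2; omega⟩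

lemma tsum_measure_eq_ne_top (hC : IsBDChain P X k l r) {n : ℕ} (hn : n ≠ 0) :
    ∑' m, P {ω | X m ω = n} ≠ ⊤ := by
  have := hC.isProb
  have := NeZero.mk hn
  obtain ⟨δ, hδ, hdesc⟩ := hC.exists_mul_le_measure_descent n
  -- a visit to `n` followed by a straight descent to `0` is not repeated within `n` steps
  have hdescents : ∑' m, P {ω | X m ω = n ∧ X (m + n) ω = 0} ≤ n := by
    refine (tsum_measure_le_of_aedisjoint_of_add_le (μ := P) (n := n)
      (s := fun m => {ω | X m ω = n ∧ X (m + n) ω = 0})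
      (fun m => ((hC.meas m (measurableSet_singleton n)).inter
        (hC.meas (m + n) (measurableSet_singleton 0))).nullMeasurableSet)
      fun m m' hmm' => measure_eq_zero_iff_ae_notMem.2 (hC.ae_isBDPath.mono
        fun ω hω ⟨⟨_, h0⟩, hn', _⟩ => hn (hn' ▸ hω.eq_zero_of_le hmm' h0))).trans_eq ?_
    rw [measure_univ, mul_one]
  refine fun htop => ENNReal.natCast_ne_top n (top_le_iff.1 ?_)
  calc ⊤ = δ * ∑' m, P {ω | X m ω = n} := by rw [htop, ENNReal.mul_top hδ]
    _ = ∑' m, δ * P {ω | X m ω = n} := ENNReal.tsum_mul_left.symm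
    _ ≤ ∑' m, P {ω | X m ω = n ∧ X (m + n) ω = 0} :=
        ENNReal.tsum_le_tsum fun m => by simpa using hdesc m Set.univ MeasurableSet.univ
    _ ≤ n := hdescents

lemma tendsto_measure_stopped_eq (hC : IsBDChain P X k l r) {T : ℕ → Ω → ℕ}
    (hT : ∀ j, Measurable (T j))
    (hconv : ∀ᵐ ω ∂P, Tendsto (fun j => (T j ω : ℕ∞)) atTop (𝓝 (hit0 X ω)))
    {n : ℕ} (hn : n ≠ 0) :
    Tendsto (fun j => P {ω | X (T j ω) ω = n}) atTop (𝓝 0) := by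
  have := hC.isProb
  have hvis : ∀ᵐ ω ∂P, ∀ᶠ m in atTop, X m ω ≠ n :=
    ae_eventually_notMem (hC.tsum_measure_eq_ne_top hn)
  simpa only [measure_empty] using
    tendsto_measure_of_ae_tendsto_indicator_of_isFiniteMeasure atTop
      (As := fun j => {ω | X (T j ω) ω = n}) MeasurableSet.empty
      (fun j => measurable_stopped hC.meas (hT j) (measurableSet_singleton n))
      (by filter_upwards [hconv, hvis] with ω hω hvisω
          exact (eventually_ne_of_tendsto_hit0 hn hvisω hω).mono fun j hj => by simpa using hj)

end IsBDChain

theorem stmt15_general {Ω : Type*} [MeasurableSpace Ω] (P : Measure Ω) (X : ℕ → Ω → ℕ)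
    (k : ℕ) (l r : ℕ → ℝ) (hC : IsBDChain P X k l r)
    (hsum : Summable fun n : ℕ => |1 - l (n + 1) / r (n + 1)|)
    (T : ℕ → Ω → ℕ) (hstop : ∀ m, IsBDStop X (T m))
    (hint : ∀ m, ∫⁻ ω, (T m ω : ℝ≥0∞) ∂P < ⊤)
    (hconv : ∀ᵐ ω ∂P, Tendsto (fun m => (T m ω : ℕ∞)) atTop (nhds (hit0 X ω))) :
    ∃ L : ℝ≥0∞, L ≠ 0 ∧ L ≠ ⊤ ∧
      Tendsto (fun m => ∫⁻ ω, (X (T m ω) ω : ℝ≥0∞) ∂P) atTop (nhds L) := by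
  obtain ⟨c, hc, htc⟩ := exists_tendsto_tp hC.l_pos hC.r_pos hsum
  obtain ⟨b, hb⟩ := htc.bddAbove_range
  have hT : ∀ j, Measurable (T j) := fun j => (hstop j).measurable hC.meas
  have hlim := tendsto_const_mul_lintegral_of_isEquivalent
    (fun j => measurable_stopped hC.meas (hT j)) (xp_nonneg hC.l_pos hC.r_pos) (by simp [xp])
    hc.le (const_mul_isEquivalent_xp hc htc) ENNReal.ofReal_ne_top
    (fun j => hC.lintegral_ofReal_xp_stopped (fun i => hb ⟨i, rfl⟩) (hstop j) (hint j).ne)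
    (fun n hn => hC.tendsto_measure_stopped_eq hT hconv hn)
  have hc₀ : ENNReal.ofReal c ≠ 0 := (ENNReal.ofReal_pos.2 hc).ne'
  refine ⟨(ENNReal.ofReal c)⁻¹ * ENNReal.ofReal (xp l r k),
    mul_ne_zero (ENNReal.inv_ne_zero.2 ENNReal.ofReal_ne_top)
      (ENNReal.ofReal_pos.2 (xp_pos hC.l_pos hC.r_pos (by have := hC.one_le_k; omega))).ne',
    ENNReal.mul_ne_top (ENNReal.inv_ne_top.2 hc₀) ENNReal.ofReal_ne_top, ?_⟩
  refine (ENNReal.Tendsto.const_mul hlim (Or.inr (ENNReal.inv_ne_top.2 hc₀))).congr fun j => ?_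
  exact ENNReal.inv_mul_cancel_left hc₀ ENNReal.ofReal_ne_top

/-- If `Σ_{n=1}^∞ |1 - l_n/r_n| < ∞`, then for any non-decreasing
sequence of stopping times `T_m` with `E[T_m] < ∞` and `T_m → T_∂` a.s., the limit
`lim_m E[X_{T_m}]` exists and lies in `(0,∞)`. -/
theorem stmt15 {Ω : Type*} [MeasurableSpace Ω] (P : Measure Ω) (X : ℕ → Ω → ℕ)
    (k : ℕ) (l r : ℕ → ℝ) (hC : IsBDChain P X k l r)
    (hsum : Summable fun n : ℕ => |1 - l (n + 1) / r (n + 1)|)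
    (T : ℕ → Ω → ℕ) (hstop : ∀ m, IsBDStop X (T m))
    (hmono : ∀ ω, Monotone fun m => T m ω)
    (hint : ∀ m, ∫⁻ ω, (T m ω : ℝ≥0∞) ∂P < ⊤)
    (hconv : ∀ᵐ ω ∂P, Tendsto (fun m => (T m ω : ℕ∞)) atTop (nhds (hit0 X ω))) :
    ∃ L : ℝ≥0∞, L ≠ 0 ∧ L ≠ ⊤ ∧
      Tendsto (fun m => ∫⁻ ω, (X (T m ω) ω : ℝ≥0∞) ∂P) atTop (nhds L) :=
  stmt15_general P X k l r hC hsum T hstop hint hconv
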